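/- For a ∈ (0,1) and r ∈ (0,1), the generalized elliptic integrals satisfy E_a(r)K_a(r') + E_a(r')K_a(r) - K_a(r)K_a(r') = π sin(π a) / (4(1-a)), where K_a(r) = (π/2)F(a, 1-a; 1; r²), E_a(r) = (π/2)F(a-1, 1-a; 1; r²), and r' = √(1-r²). -/

import Mathlib

open Real Set

/-- The Gaussian hypergeometric function ₂F₁(a,b;c;x) as a power series sum. -/
noncomputable def hyperF (a b c x : ℝ) : ℝ :=
  ∑' n : ℕ, Polynomial.eval a (ascPochhammer ℝ n) * Polynomial.eval b (ascPochhammer ℝ n) /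
      (Polynomial.eval c (ascPochhammer ℝ n) * (n.factorial : ℝ)) * x ^ n

/-- Generalized elliptic integral of the first kind. -/
noncomputable def genK (a r : ℝ) : ℝ := π / 2 * hyperF a (1 - a) 1 (r ^ 2)

/-- Generalized elliptic integral of the second kind. -/
noncomputable def genE (a r : ℝ) : ℝ := π / 2 * hyperF (a - 1) (1 - a) 1 (r ^ 2)

/-!
Put `b = 1 - a`, `K = ₂F₁(1 - b, b; 1; ·)` and `E = ₂F₁(-b, b; 1; ·)`. Comparing coefficients
gives `x E' = b (E - K)` and `x (1 - x) K' = b (E - (1 - x) K)`, so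
`W x = E x K (1 - x) + E (1 - x) K x - K x K (1 - x)` has zero derivative on `(0, 1)`.
To evaluate the constant let `x → 1⁻`: `K (1 - x) → 1`; `(E - K) (1 - x) = O(1 - x)` while
`K x = O(log (1 / (1 - x)))`; and by Abel's theorem `E x` tends to the sum of the coefficients
of `E`, whose partial sums are the partial products of Euler's product for `sin (π b) / (π b)`.
-/

namespace GeneralizedLegendre

open Filter Topology
open Finset (range)

section PowerSeries

variable {c : ℕ → ℝ} {C x : ℝ}

theorem summable_natCast_mul_pow_sub_one {r : ℝ} (hr : |r| < 1) :
    Summable fun n : ℕ => (n : ℝ) * r ^ (n - 1) := by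
  rw [← summable_nat_add_iff 1]
  refine ((summable_pow_mul_geometric_of_norm_lt_one 1 hr).add
    (summable_geometric_of_abs_lt_one hr)).congr fun n => ?_
  simp only [pow_one, Nat.add_sub_cancel]
  push_cast
  ring

theorem summable_mul_pow_of_abs_le (hc : ∀ n, |c n| ≤ C) (hx : |x| < 1) :
    Summable fun n => c n * x ^ n :=
  .of_norm_bounded ((summable_geometric_of_lt_one (abs_nonneg x) hx).mul_left C) fun n => by
    rw [norm_mul, norm_pow, Real.norm_eq_abs, Real.norm_eq_abs]
    exact mul_le_mul_of_nonneg_right (hc n) (by positivity)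

theorem norm_mul_natCast_mul_pow_le (hc : ∀ n, |c n| ≤ C) {y ρ : ℝ} (hy : |y| ≤ ρ)
    (n : ℕ) :
    ‖c n * (n * y ^ (n - 1))‖ ≤ C * (n * ρ ^ (n - 1)) := by
  have hC : 0 ≤ C := (abs_nonneg _).trans (hc 0)
  rw [Real.norm_eq_abs, abs_mul, abs_mul, Nat.abs_cast, abs_pow]
  gcongr
  exact hc n

theorem hasDerivAt_tsum_mul_pow (hc : ∀ n, |c n| ≤ C) (hx : |x| < 1) :
    HasDerivAt (fun y => ∑' n, c n * y ^ n) (∑' n, c n * (n * x ^ (n - 1))) x := by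
  obtain ⟨ρ, hxρ, hρ⟩ := exists_between hx
  have hρ' : |ρ| < 1 := by rwa [abs_of_pos ((abs_nonneg x).trans_lt hxρ)]
  exact hasDerivAt_tsum_of_isPreconnected ((summable_natCast_mul_pow_sub_one hρ').mul_left C)
    isOpen_Ioo (convex_Ioo (-ρ) ρ).isPreconnected
    (fun n y _ => (hasDerivAt_pow n y).const_mul (c n))
    (fun n y hy => norm_mul_natCast_mul_pow_le hc (abs_le.mpr ⟨hy.1.le, hy.2.le⟩) n)
    (y₀ := 0) (by simpa using (abs_nonneg x).trans_lt hxρ)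
    (summable_mul_pow_of_abs_le hc (by simp)) (abs_lt.mp hxρ)

theorem hasSum_natCast_mul_mul_pow (hc : ∀ n, |c n| ≤ C) (hx : |x| < 1) :
    HasSum (fun n => n * c n * x ^ n) (x * deriv (fun y => ∑' n, c n * y ^ n) x) := by
  rw [(hasDerivAt_tsum_mul_pow hc hx).deriv]
  have hx' : |(|x|)| < 1 := by rwa [abs_abs]
  have hs : Summable fun n => c n * (n * x ^ (n - 1)) :=
    .of_norm_bounded ((summable_natCast_mul_pow_sub_one hx').mul_left C)
      (norm_mul_natCast_mul_pow_le hc le_rfl)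
  have hterm : (fun n => n * c n * x ^ n) = fun n => x * (c n * (n * x ^ (n - 1))) := by
    funext n
    cases n with
    | zero => simp
    | succ m => simp only [Nat.add_sub_cancel, pow_succ]; ring
  rw [hterm]
  exact hs.hasSum.mul_left x

theorem tsum_mul_pow_le_div_one_sub (hc : ∀ n, |c n| ≤ 1) (hc₀ : c 0 = 0) (hx₀ : 0 ≤ x)
    (hx₁ : x < 1) : ∑' n, c n * x ^ n ≤ x / (1 - x) := by
  have hx : |x| < 1 := by rwa [abs_of_nonneg hx₀]
  have hsum := summable_mul_pow_of_abs_le hc hx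
  have hgeom : HasSum (fun n : ℕ => x ^ (n + 1)) (x / (1 - x)) := by
    simpa only [← pow_succ', ← div_eq_mul_inv] using
      (hasSum_geometric_of_lt_one hx₀ hx₁).mul_left x
  rw [hsum.tsum_eq_zero_add, hc₀, zero_mul, zero_add]
  refine hasSum_le (fun n => ?_) ((summable_nat_add_iff 1).mpr hsum).hasSum hgeom
  exact mul_le_of_le_one_left (by positivity) (abs_le.mp (hc _)).2

theorem tsum_mul_pow_le_one_sub_log (hc : ∀ n, |c n| ≤ 1)
    (hc_succ : ∀ n : ℕ, c (n + 1) ≤ 1 / (n + 1)) (hx₀ : 0 ≤ x) (hx₁ : x < 1) :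
    ∑' n, c n * x ^ n ≤ 1 - log (1 - x) := by
  have hx : |x| < 1 := by rwa [abs_of_nonneg hx₀]
  have hsum := summable_mul_pow_of_abs_le hc hx
  rw [hsum.tsum_eq_zero_add, pow_zero, mul_one, sub_eq_add_neg]
  gcongr
  · exact (abs_le.mp (hc 0)).2
  · refine hasSum_le (fun n => ?_) ((summable_nat_add_iff 1).mpr hsum).hasSum
      (Real.hasSum_pow_div_log_of_abs_lt_one hx)
    exact (mul_le_mul_of_nonneg_right (hc_succ n) (by positivity)).trans_eq (by ring)

end PowerSeries

noncomputable def hyperCoeff (a b c : ℝ) (n : ℕ) : ℝ :=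
  Polynomial.eval a (ascPochhammer ℝ n) * Polynomial.eval b (ascPochhammer ℝ n) /
    (Polynomial.eval c (ascPochhammer ℝ n) * (n.factorial : ℝ))

theorem hyperF_eq_tsum (a b c x : ℝ) : hyperF a b c x = ∑' n, hyperCoeff a b c n * x ^ n := rfl

@[simp]
theorem hyperCoeff_zero (a b c : ℝ) : hyperCoeff a b c 0 = 1 := by simp [hyperCoeff]

theorem hyperF_zero (a b c : ℝ) : hyperF a b c 0 = 1 := by
  rw [hyperF_eq_tsum, tsum_eq_single 0 fun n hn => by simp [hn]]
  simp

theorem hyperCoeff_succ (a b c : ℝ) (n : ℕ) :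
    hyperCoeff a b c (n + 1) = hyperCoeff a b c n * ((a + n) * (b + n)) / ((c + n) * (n + 1)) := by
  simp only [hyperCoeff, ascPochhammer_succ_eval, Nat.factorial_succ, Nat.cast_mul,
    Nat.cast_succ]
  rw [div_mul_eq_mul_div, div_div]
  congr 1 <;> ring

noncomputable def eulerSinProd (b : ℝ) (m : ℕ) : ℝ :=
  ∏ j ∈ range m, (1 - b ^ 2 / ((j : ℝ) + 1) ^ 2)

theorem eulerSinProd_succ (b : ℝ) (m : ℕ) :
    eulerSinProd b (m + 1) = eulerSinProd b m * (1 - b ^ 2 / ((m : ℝ) + 1) ^ 2) :=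
  Finset.prod_range_succ _ _

theorem eulerSinProd_mem_Ioc {b : ℝ} (hb : |b| < 1) (m : ℕ) : eulerSinProd b m ∈ Ioc 0 1 := by
  have hfactor : ∀ j ∈ range m, 1 - b ^ 2 / ((j : ℝ) + 1) ^ 2 ∈ Ioc 0 1 := fun j _ => by
    have hb2 : b ^ 2 < 1 := by rwa [sq_lt_one_iff_abs_lt_one]
    have hj : (1 : ℝ) ≤ ((j : ℝ) + 1) ^ 2 := one_le_pow₀ (le_add_of_nonneg_left j.cast_nonneg)
    constructor
    · rw [sub_pos, div_lt_one (by positivity)]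
      linarith
    · linarith [div_nonneg (sq_nonneg b) (by positivity : (0 : ℝ) ≤ ((j : ℝ) + 1) ^ 2)]
  exact ⟨Finset.prod_pos fun j hj => (hfactor j hj).1,
    Finset.prod_le_one (fun j hj => (hfactor j hj).1.le) fun j hj => (hfactor j hj).2⟩

theorem tendsto_eulerSinProd {b : ℝ} (hb : b ≠ 0) :
    Tendsto (eulerSinProd b) atTop (𝓝 (sin (π * b) / (π * b))) := by
  have hπb : π * b ≠ 0 := mul_ne_zero pi_ne_zero hb
  refine ((tendsto_euler_sin_prod b).div_const (π * b)).congr fun m => ?_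
  rw [eulerSinProd, mul_div_cancel_left₀ _ hπb]

theorem hyperCoeff_one_sub_succ (b : ℝ) (m : ℕ) :
    hyperCoeff (1 - b) b 1 (m + 1) = b * (m + 1 - b) * eulerSinProd b m / (m + 1) ^ 2 := by
  induction m with
  | zero => simp [hyperCoeff_succ, eulerSinProd]; ring
  | succ k ih =>
    rw [hyperCoeff_succ, ih, eulerSinProd_succ]
    push_cast
    field_simp
    ring

theorem hyperCoeff_neg_succ (b : ℝ) (m : ℕ) :
    hyperCoeff (-b) b 1 (m + 1) = -b ^ 2 * eulerSinProd b m / (m + 1) ^ 2 := by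
  induction m with
  | zero => simp [hyperCoeff_succ, eulerSinProd]; ring
  | succ k ih =>
    rw [hyperCoeff_succ, ih, eulerSinProd_succ]
    push_cast
    field_simp
    ring

theorem sum_range_succ_hyperCoeff_neg (b : ℝ) (m : ℕ) :
    ∑ n ∈ range (m + 1), hyperCoeff (-b) b 1 n = eulerSinProd b m := by
  induction m with
  | zero => simp [eulerSinProd]
  | succ k ih =>
    rw [Finset.sum_range_succ, ih, hyperCoeff_neg_succ, eulerSinProd_succ]
    field_simp
    ring

theorem tendsto_sum_range_hyperCoeff_neg {b : ℝ} (hb : b ≠ 0) :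
    Tendsto (fun n => ∑ i ∈ range n, hyperCoeff (-b) b 1 i) atTop
      (𝓝 (sin (π * b) / (π * b))) := by
  rw [← tendsto_add_atTop_iff_nat 1]
  simpa only [sum_range_succ_hyperCoeff_neg] using tendsto_eulerSinProd hb

theorem natCast_mul_hyperCoeff_neg (b : ℝ) (n : ℕ) :
    n * hyperCoeff (-b) b 1 n = b * (hyperCoeff (-b) b 1 n - hyperCoeff (1 - b) b 1 n) := by
  cases n with
  | zero => simp
  | succ m =>
    rw [hyperCoeff_neg_succ, hyperCoeff_one_sub_succ]
    push_cast
    field_simp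
    ring

theorem add_mul_hyperCoeff_one_sub (b : ℝ) (m : ℕ) :
    (m + b) * hyperCoeff (1 - b) b 1 m = b * eulerSinProd b m := by
  cases m with
  | zero => simp [eulerSinProd]
  | succ k =>
    rw [hyperCoeff_one_sub_succ, eulerSinProd_succ]
    push_cast
    field_simp
    ring

theorem succ_mul_hyperCoeff_one_sub_succ (b : ℝ) (m : ℕ) :
    (m + 1) * hyperCoeff (1 - b) b 1 (m + 1) -
        b * (hyperCoeff (-b) b 1 (m + 1) - hyperCoeff (1 - b) b 1 (m + 1)) =
      b * eulerSinProd b m := by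
  rw [hyperCoeff_neg_succ, hyperCoeff_one_sub_succ]
  field_simp
  ring

theorem hyperCoeff_one_sub_sub_hyperCoeff_neg_succ (b : ℝ) (m : ℕ) :
    hyperCoeff (1 - b) b 1 (m + 1) - hyperCoeff (-b) b 1 (m + 1) =
      b * eulerSinProd b m / (m + 1) := by
  rw [hyperCoeff_neg_succ, hyperCoeff_one_sub_succ]
  field_simp
  ring

section Bounds

variable {b : ℝ}

theorem hyperCoeff_one_sub_nonneg (hb : b ∈ Ioo 0 1) (n : ℕ) :
    0 ≤ hyperCoeff (1 - b) b 1 n := by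
  cases n with
  | zero => simp
  | succ m =>
    have hP := (eulerSinProd_mem_Ioc (abs_lt.mpr ⟨by linarith [hb.1], hb.2⟩) m).1
    rw [hyperCoeff_one_sub_succ]
    have : 0 ≤ (m : ℝ) + 1 - b := by linarith [m.cast_nonneg (α := ℝ), hb.2]
    have := hb.1
    positivity

theorem hyperCoeff_one_sub_succ_le (hb : b ∈ Ioo 0 1) (m : ℕ) :
    hyperCoeff (1 - b) b 1 (m + 1) ≤ 1 / (m + 1) := by
  obtain ⟨hP₀, hP₁⟩ := eulerSinProd_mem_Ioc (abs_lt.mpr ⟨by linarith [hb.1], hb.2⟩) m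
  have hm : (0 : ℝ) ≤ m := m.cast_nonneg
  rw [hyperCoeff_one_sub_succ, div_le_div_iff₀ (by positivity) (by positivity)]
  have h : b * (m + 1 - b) ≤ m + 1 := by nlinarith [hb.1, hb.2]
  have h' : 0 ≤ b * (m + 1 - b) := mul_nonneg hb.1.le (by linarith [hb.2])
  nlinarith [mul_le_mul h hP₁ hP₀.le (by positivity)]

theorem abs_hyperCoeff_one_sub_le_one (hb : b ∈ Ioo 0 1) (n : ℕ) :
    |hyperCoeff (1 - b) b 1 n| ≤ 1 := by
  rw [abs_of_nonneg (hyperCoeff_one_sub_nonneg hb n)]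
  cases n with
  | zero => simp
  | succ m =>
    refine (hyperCoeff_one_sub_succ_le hb m).trans ?_
    rw [div_le_one (by positivity)]
    linarith [m.cast_nonneg (α := ℝ)]

theorem abs_hyperCoeff_neg_le_one (hb : b ∈ Ioo 0 1) (n : ℕ) :
    |hyperCoeff (-b) b 1 n| ≤ 1 := by
  cases n with
  | zero => simp
  | succ m =>
    obtain ⟨hP₀, hP₁⟩ := eulerSinProd_mem_Ioc (abs_lt.mpr ⟨by linarith [hb.1], hb.2⟩) m
    have hm : (1 : ℝ) ≤ ((m : ℝ) + 1) ^ 2 := one_le_pow₀ (le_add_of_nonneg_left m.cast_nonneg)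
    rw [hyperCoeff_neg_succ, abs_div, abs_of_nonpos (by nlinarith), abs_of_pos (by positivity),
      div_le_one (by positivity)]
    nlinarith [hb.1, hb.2]

theorem hyperCoeff_one_sub_sub_hyperCoeff_neg_mem (hb : b ∈ Ioo 0 1) (n : ℕ) :
    hyperCoeff (1 - b) b 1 n - hyperCoeff (-b) b 1 n ∈ Icc 0 1 := by
  cases n with
  | zero => simp
  | succ m =>
    obtain ⟨hP₀, hP₁⟩ := eulerSinProd_mem_Ioc (abs_lt.mpr ⟨by linarith [hb.1], hb.2⟩) m
    rw [hyperCoeff_one_sub_sub_hyperCoeff_neg_succ]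
    refine ⟨by have := hb.1; positivity, ?_⟩
    rw [div_le_one (by positivity)]
    nlinarith [hb.1, hb.2, m.cast_nonneg (α := ℝ)]

end Bounds

section LegendreFunction

variable {b x : ℝ}

theorem differentiableAt_hyperF {a b c C : ℝ} (hC : ∀ n, |hyperCoeff a b c n| ≤ C)
    (hx : |x| < 1) : DifferentiableAt ℝ (hyperF a b c) x :=
  (hasDerivAt_tsum_mul_pow hC hx).differentiableAt

theorem hasSum_natCast_mul_hyperCoeff_mul_pow {a b c C : ℝ}
    (hC : ∀ n, |hyperCoeff a b c n| ≤ C) (hx : |x| < 1) :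
    HasSum (fun n => n * hyperCoeff a b c n * x ^ n) (x * deriv (hyperF a b c) x) :=
  hasSum_natCast_mul_mul_pow hC hx

theorem hasSum_hyperF_one_sub (hb : b ∈ Ioo 0 1) (hx : |x| < 1) :
    HasSum (fun n => hyperCoeff (1 - b) b 1 n * x ^ n) (hyperF (1 - b) b 1 x) :=
  (summable_mul_pow_of_abs_le (abs_hyperCoeff_one_sub_le_one hb) hx).hasSum

theorem hasSum_hyperF_neg (hb : b ∈ Ioo 0 1) (hx : |x| < 1) :
    HasSum (fun n => hyperCoeff (-b) b 1 n * x ^ n) (hyperF (-b) b 1 x) :=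
  (summable_mul_pow_of_abs_le (abs_hyperCoeff_neg_le_one hb) hx).hasSum

theorem hyperF_neg_ode (hb : b ∈ Ioo 0 1) (hx : |x| < 1) :
    x * deriv (hyperF (-b) b 1) x = b * (hyperF (-b) b 1 x - hyperF (1 - b) b 1 x) := by
  refine (hasSum_natCast_mul_hyperCoeff_mul_pow (abs_hyperCoeff_neg_le_one hb) hx).unique ?_
  simp_rw [natCast_mul_hyperCoeff_neg, mul_assoc, sub_mul]
  exact ((hasSum_hyperF_neg hb hx).sub (hasSum_hyperF_one_sub hb hx)).mul_left b

theorem hyperF_one_sub_ode (hb : b ∈ Ioo 0 1) (hx : |x| < 1) :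
    x * (1 - x) * deriv (hyperF (1 - b) b 1) x =
      b * (hyperF (-b) b 1 x - (1 - x) * hyperF (1 - b) b 1 x) := by
  have hθK := hasSum_natCast_mul_hyperCoeff_mul_pow (abs_hyperCoeff_one_sub_le_one hb) hx
  have hK := hasSum_hyperF_one_sub hb hx
  have hE := hasSum_hyperF_neg hb hx
  let L : ℕ → ℝ := fun n =>
    n * hyperCoeff (1 - b) b 1 n - b * (hyperCoeff (-b) b 1 n - hyperCoeff (1 - b) b 1 n)
  have hL : HasSum (fun n => L n * x ^ n)
      (x * deriv (hyperF (1 - b) b 1) x - b * (hyperF (-b) b 1 x - hyperF (1 - b) b 1 x)) :=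
    (hθK.sub ((hE.sub hK).mul_left b)).congr_fun fun n => by ring
  -- `L (m + 1) = (m + b) * coeff m` says `θK - b (E - K) = x (θK + b K)`, with `θ = x d/dx`.
  have hL' : HasSum (fun n => L n * x ^ n)
      (x * (x * deriv (hyperF (1 - b) b 1) x + b * hyperF (1 - b) b 1 x)) := by
    have hshift : HasSum (fun m => L (m + 1) * x ^ (m + 1))
        (x * (x * deriv (hyperF (1 - b) b 1) x + b * hyperF (1 - b) b 1 x)) :=
      ((hθK.add (hK.mul_left b)).mul_left x).congr_fun fun m => by
        simp only [L]
        push_cast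
        linear_combination x ^ (m + 1) *
          (succ_mul_hyperCoeff_one_sub_succ b m - add_mul_hyperCoeff_one_sub b m)
    have hL₀ : L 0 = 0 := by simp [L]
    have h := (hasSum_nat_add_iff (f := fun n => L n * x ^ n) 1).mp hshift
    rwa [Finset.sum_range_one, hL₀, zero_mul, add_zero] at h
  linear_combination hL.unique hL'

end LegendreFunction

section LegendreW

variable {b : ℝ}

noncomputable def legendreW (b x : ℝ) : ℝ :=
  hyperF (-b) b 1 x * hyperF (1 - b) b 1 (1 - x) +
    hyperF (-b) b 1 (1 - x) * hyperF (1 - b) b 1 x -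
    hyperF (1 - b) b 1 x * hyperF (1 - b) b 1 (1 - x)

theorem hasDerivAt_legendreW (hb : b ∈ Ioo 0 1) {x : ℝ} (hx : x ∈ Ioo 0 1) :
    HasDerivAt (legendreW b) 0 x := by
  have hx₁ : |x| < 1 := abs_lt.mpr ⟨by linarith [hx.1], hx.2⟩
  have hx₂ : |1 - x| < 1 := abs_lt.mpr ⟨by linarith [hx.2], by linarith [hx.1]⟩
  have hcK := abs_hyperCoeff_one_sub_le_one hb
  have hcE := abs_hyperCoeff_neg_le_one hb
  have hK₁ := (differentiableAt_hyperF hcK hx₁).hasDerivAt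
  have hE₁ := (differentiableAt_hyperF hcE hx₁).hasDerivAt
  have hK₂ := (differentiableAt_hyperF hcK hx₂).hasDerivAt.comp_const_sub 1 x
  have hE₂ := (differentiableAt_hyperF hcE hx₂).hasDerivAt.comp_const_sub 1 x
  refine (((hE₁.fun_mul hK₂).fun_add (hE₂.fun_mul hK₁)).fun_sub
    (hK₁.fun_mul hK₂)).congr_deriv ?_
  have hx₀ : x * (1 - x) ≠ 0 := mul_ne_zero hx.1.ne' (sub_pos.mpr hx.2).ne'
  have r₄ := hyperF_one_sub_ode hb hx₂
  rw [sub_sub_cancel] at r₄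
  refine mul_left_cancel₀ hx₀ ?_
  linear_combination (1 - x) * hyperF (1 - b) b 1 (1 - x) * hyperF_neg_ode hb hx₁ +
    (hyperF (-b) b 1 (1 - x) - hyperF (1 - b) b 1 (1 - x)) * hyperF_one_sub_ode hb hx₁ -
    x * hyperF (1 - b) b 1 x * hyperF_neg_ode hb hx₂ +
    (hyperF (1 - b) b 1 x - hyperF (-b) b 1 x) * r₄

theorem legendreW_eq_legendreW (hb : b ∈ Ioo 0 1) {x y : ℝ} (hx : x ∈ Ioo 0 1)
    (hy : y ∈ Ioo 0 1) : legendreW b x = legendreW b y :=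
  isOpen_Ioo.is_const_of_deriv_eq_zero isPreconnected_Ioo
    (fun _ hz => (hasDerivAt_legendreW hb hz).differentiableAt.differentiableWithinAt)
    (fun _ hz => (hasDerivAt_legendreW hb hz).deriv) hx hy

theorem abs_sub_mul_hyperF_one_sub_le (hb : b ∈ Ioo 0 1) {y : ℝ} (hy : y ∈ Ioo 0 1) :
    |(hyperF (-b) b 1 y - hyperF (1 - b) b 1 y) * hyperF (1 - b) b 1 (1 - y)| ≤
      (y - y * log y) / (1 - y) := by
  have hy₁ : |y| < 1 := abs_lt.mpr ⟨by linarith [hy.1], hy.2⟩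
  have hy₂ : |1 - y| < 1 := abs_lt.mpr ⟨by linarith [hy.2], by linarith [hy.1]⟩
  have hcoeff := hyperCoeff_one_sub_sub_hyperCoeff_neg_mem hb
  have hD : HasSum (fun n => (hyperCoeff (1 - b) b 1 n - hyperCoeff (-b) b 1 n) * y ^ n)
      (hyperF (1 - b) b 1 y - hyperF (-b) b 1 y) :=
    ((hasSum_hyperF_one_sub hb hy₁).sub (hasSum_hyperF_neg hb hy₁)).congr_fun fun _ =>
      sub_mul _ _ _
  have hD₀ : 0 ≤ hyperF (1 - b) b 1 y - hyperF (-b) b 1 y :=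
    hD.nonneg fun n => mul_nonneg (hcoeff n).1 (pow_nonneg hy.1.le n)
  have hD₁ : hyperF (1 - b) b 1 y - hyperF (-b) b 1 y ≤ y / (1 - y) :=
    hD.tsum_eq ▸ tsum_mul_pow_le_div_one_sub
      (fun n => abs_le.mpr ⟨by linarith [(hcoeff n).1], (hcoeff n).2⟩) (by simp) hy.1.le hy.2
  have hK₀ : 0 ≤ hyperF (1 - b) b 1 (1 - y) :=
    (hasSum_hyperF_one_sub hb hy₂).nonneg fun n =>
      mul_nonneg (hyperCoeff_one_sub_nonneg hb n) (pow_nonneg (by linarith [hy.2]) n)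
  have hK₁ : hyperF (1 - b) b 1 (1 - y) ≤ 1 - log y := by
    have h := tsum_mul_pow_le_one_sub_log (abs_hyperCoeff_one_sub_le_one hb)
      (hyperCoeff_one_sub_succ_le hb) (sub_nonneg.mpr hy.2.le) (by linarith [hy.1])
    rwa [sub_sub_cancel] at h
  rw [abs_mul, abs_sub_comm, abs_of_nonneg hD₀, abs_of_nonneg hK₀,
    show (y - y * log y) / (1 - y) = y / (1 - y) * (1 - log y) by ring]
  exact mul_le_mul hD₁ hK₁ hK₀ (div_nonneg hy.1.le (by linarith [hy.2]))

theorem tendsto_legendreW (hb : b ∈ Ioo 0 1) :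
    Tendsto (legendreW b) (𝓝[<] 1) (𝓝 (sin (π * b) / (π * b))) := by
  have hreflect : Tendsto (fun x : ℝ => 1 - x) (𝓝[<] 1) (𝓝 0) :=
    ((continuous_const.sub continuous_id).tendsto' 1 0 (sub_self 1)).mono_left nhdsWithin_le_nhds
  have hE : Tendsto (hyperF (-b) b 1) (𝓝[<] 1) (𝓝 (sin (π * b) / (π * b))) :=
    Real.tendsto_tsum_powerSeries_nhdsWithin_lt (tendsto_sum_range_hyperCoeff_neg hb.1.ne')
  have hK : Tendsto (fun x => hyperF (1 - b) b 1 (1 - x)) (𝓝[<] 1) (𝓝 1) := by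
    have hcont := (differentiableAt_hyperF (abs_hyperCoeff_one_sub_le_one hb)
      (by simp : |(0 : ℝ)| < 1)).continuousAt
    have h := hcont.tendsto.comp hreflect
    rwa [hyperF_zero] at h
  have hbound : Tendsto (fun x => ((1 - x) - (1 - x) * log (1 - x)) / x) (𝓝[<] 1) (𝓝 0) := by
    have hg : ContinuousAt (fun y => (y - y * log y) / (1 - y)) 0 :=
      (continuous_id.sub continuous_mul_log).continuousAt.div
        (continuousAt_const.sub continuousAt_id) (by norm_num)
    simpa [Function.comp_def] using hg.tendsto.comp hreflect
  have hR : Tendsto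
      (fun x => (hyperF (-b) b 1 (1 - x) - hyperF (1 - b) b 1 (1 - x)) * hyperF (1 - b) b 1 x)
      (𝓝[<] 1) (𝓝 0) := by
    refine squeeze_zero_norm' ?_ hbound
    filter_upwards [Ioo_mem_nhdsLT one_pos] with x hx
    have h := abs_sub_mul_hyperF_one_sub_le hb
      (⟨by linarith [hx.2], by linarith [hx.1]⟩ : 1 - x ∈ Ioo 0 1)
    rwa [sub_sub_cancel, ← Real.norm_eq_abs] at h
  simpa using ((hE.mul hK).add hR).congr fun x => by unfold legendreW; ring

theorem legendreW_eq (hb : b ∈ Ioo 0 1) {x : ℝ} (hx : x ∈ Ioo 0 1) :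
    legendreW b x = sin (π * b) / (π * b) := by
  refine tendsto_nhds_unique (tendsto_const_nhds.congr' ?_) (tendsto_legendreW hb)
  filter_upwards [Ioo_mem_nhdsLT one_pos] with y hy using legendreW_eq_legendreW hb hx hy

end LegendreW

end GeneralizedLegendre

open GeneralizedLegendre

theorem generalized_legendre_relation (a r : ℝ) (ha : a ∈ Set.Ioo (0 : ℝ) 1)
    (hr : r ∈ Set.Ioo (0 : ℝ) 1) :
    genE a r * genK a (Real.sqrt (1 - r ^ 2)) + genE a (Real.sqrt (1 - r ^ 2)) * genK a r -
      genK a r * genK a (Real.sqrt (1 - r ^ 2)) =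
    π * Real.sin (π * a) / (4 * (1 - a)) := by
  have hb : 1 - a ∈ Ioo (0 : ℝ) 1 := ⟨by linarith [ha.2], by linarith [ha.1]⟩
  have hr₂ : r ^ 2 ∈ Ioo (0 : ℝ) 1 := ⟨by positivity [hr.1], by nlinarith [hr.1, hr.2]⟩
  have hW := legendreW_eq hb hr₂
  rw [legendreW, sub_sub_cancel, neg_sub, mul_one_sub, sin_pi_sub] at hW
  have hsqrt : √(1 - r ^ 2) ^ 2 = 1 - r ^ 2 := sq_sqrt (by nlinarith [hr.1, hr.2])
  have h1a : 1 - a ≠ 0 := hb.1.ne'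
  simp only [genK, genE, hsqrt]
  rw [show π * sin (π * a) / (4 * (1 - a)) = (π / 2) ^ 2 * (sin (π * a) / (π - π * a)) by
    field_simp; ring, ← hW]
  ring
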